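/- Let G be a finite p-group and d ≥ 1 such that G^(d) γ_{2^d+1}(G) / γ_{2^d+1}(G) is cyclic. Then for every e ≥ 1, G^(d+e) is contained in γ_{2^{d+e} + 2^{e-1}}(G). -/

import Mathlib

/-!
Write `γ n` for Mathlib's `(⊤ : Subgroup G).lowerCentralSeries n`, which is `γ_{n+1}(G)` in the
usual indexing. The three subgroups lemma gives `⁅γ m, γ n⁆ ≤ γ (m + n + 1)`, so each step of the
derived series roughly doubles the lower central index: `G^(k) ≤ γ m` implies
`G^(k+e) ≤ γ (2 ^ e * (m + 1) - 1)`. The cyclicity hypothesis gains one extra step at the start: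
since `G^(d)` is cyclic modulo `N = γ (2 ^ d)`, it is generated by one element together with part
of `N`, and both `⁅G^(d), N⁆` and `⁅N, N⁆` already lie in `γ (2 ^ (d + 1))`; hence so does
`G^(d+1)`. Doubling from there gives the claim.
-/

open Subgroup

section Commutator

variable {G : Type*} [Group G]

lemma commutator_le_iff_map_mk'_eq_bot (L : Subgroup G) [L.Normal] (X Y : Subgroup G) :
    ⁅X, Y⁆ ≤ L ↔ ⁅X.map (QuotientGroup.mk' L), Y.map (QuotientGroup.mk' L)⁆ = ⊥ := by
  rw [← map_commutator, Subgroup.map_eq_bot_iff, QuotientGroup.ker_mk']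

lemma commutator_commutator_le_of_rotate {A B C L : Subgroup G} [L.Normal]
    (h1 : ⁅⁅B, C⁆, A⁆ ≤ L) (h2 : ⁅⁅C, A⁆, B⁆ ≤ L) : ⁅⁅A, B⁆, C⁆ ≤ L := by
  simp only [commutator_le_iff_map_mk'_eq_bot L, map_commutator] at h1 h2 ⊢
  exact commutator_commutator_eq_bot_of_rotate h1 h2

lemma commutator_sup_left_le {A B C L : Subgroup G} [L.Normal]
    (hA : ⁅A, C⁆ ≤ L) (hB : ⁅B, C⁆ ≤ L) : ⁅A ⊔ B, C⁆ ≤ L := by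
  rw [commutator_le_iff_map_mk'_eq_bot, commutator_eq_bot_iff_le_centralizer] at hA hB ⊢
  rw [Subgroup.map_sup]
  exact sup_le hA hB

lemma commutator_sup_sup_le {A B L : Subgroup G} [L.Normal]
    (hAA : ⁅A, A⁆ ≤ L) (hAB : ⁅A, B⁆ ≤ L) (hBB : ⁅B, B⁆ ≤ L) : ⁅A ⊔ B, A ⊔ B⁆ ≤ L := by
  have hBA : ⁅B, A⁆ ≤ L := commutator_comm A B ▸ hAB
  have hA : ⁅A, A ⊔ B⁆ ≤ L := commutator_comm (A ⊔ B) A ▸ commutator_sup_left_le hAA hBA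
  have hB : ⁅B, A ⊔ B⁆ ≤ L := commutator_comm (A ⊔ B) B ▸ commutator_sup_left_le hAB hBB
  exact commutator_sup_left_le hA hB

lemma exists_le_zpowers_sup_of_isCyclic_map {H N : Subgroup G} [N.Normal]
    (hcyc : IsCyclic (H.map (QuotientGroup.mk' N))) :
    ∃ x ∈ H, H ≤ zpowers x ⊔ N := by
  obtain ⟨g, hg⟩ := (H.map (QuotientGroup.mk' N)).isCyclic_iff_exists_zpowers_eq_top.mp hcyc
  obtain ⟨x, hxH, rfl⟩ : g ∈ H.map (QuotientGroup.mk' N) := hg ▸ mem_zpowers g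
  refine ⟨x, hxH, ?_⟩
  rw [sup_comm, ← QuotientGroup.comap_map_mk', MonoidHom.map_zpowers, hg,
    QuotientGroup.comap_map_mk', sup_comm]
  exact le_sup_left

lemma commutator_le_of_isCyclic_map {H N L : Subgroup G} [N.Normal] [L.Normal]
    (hcyc : IsCyclic (H.map (QuotientGroup.mk' N)))
    (hHN : ⁅H, N⁆ ≤ L) (hNN : ⁅N, N⁆ ≤ L) : ⁅H, H⁆ ≤ L := by
  obtain ⟨x, hxH, hH⟩ := exists_le_zpowers_sup_of_isCyclic_map hcyc
  have hxx : ⁅zpowers x, zpowers x⁆ ≤ L :=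
    (commutator_self_eq_bot_iff.mpr inferInstance).le.trans bot_le
  have hxN : ⁅zpowers x, N⁆ ≤ L :=
    (commutator_mono (zpowers_le.mpr hxH) le_rfl).trans hHN
  exact (commutator_mono hH hH).trans (commutator_sup_sup_le hxx hxN hNN)

end Commutator

section LowerCentralSeries

variable {G : Type*} [Group G]

lemma commutator_lowerCentralSeries_le (m n : ℕ) :
    ⁅(⊤ : Subgroup G).lowerCentralSeries m, (⊤ : Subgroup G).lowerCentralSeries n⁆ ≤
      (⊤ : Subgroup G).lowerCentralSeries (m + n + 1) := by
  induction n generalizing m with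
  | zero => exact le_rfl
  | succ n ih =>
    refine (commutator_comm_le _ _).trans (commutator_commutator_le_of_rotate ?_ ?_)
    · rw [commutator_comm ⊤]
      exact (ih (m + 1)).trans (Subgroup.lowerCentralSeries_antitone _ (by omega))
    · exact commutator_mono (ih m) le_top

lemma derivedSeries_add_le_lowerCentralSeries {k m : ℕ}
    (h : derivedSeries G k ≤ (⊤ : Subgroup G).lowerCentralSeries m) (e : ℕ) :
    derivedSeries G (k + e) ≤ (⊤ : Subgroup G).lowerCentralSeries (2 ^ e * (m + 1) - 1) := by
  induction e with
  | zero => simpa using h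
  | succ e ih =>
    have hpos : 1 ≤ 2 ^ e * (m + 1) := Nat.one_le_iff_ne_zero.mpr (by positivity)
    have hdouble : 2 ^ (e + 1) * (m + 1) = 2 * (2 ^ e * (m + 1)) := by ring
    rw [← add_assoc, derivedSeries_succ]
    refine (commutator_mono ih ih).trans ((commutator_lowerCentralSeries_le _ _).trans
      (Subgroup.lowerCentralSeries_antitone _ (le_of_eq ?_)))
    omega

lemma derivedSeries_le_lowerCentralSeries_two_pow_sub_one (n : ℕ) :
    derivedSeries G n ≤ (⊤ : Subgroup G).lowerCentralSeries (2 ^ n - 1) := by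
  simpa using derivedSeries_add_le_lowerCentralSeries (k := 0) (m := 0) le_top n

lemma derivedSeries_succ_le_of_isCyclic_map (d : ℕ)
    (hcyc : IsCyclic
      ((derivedSeries G d).map (QuotientGroup.mk' ((⊤ : Subgroup G).lowerCentralSeries (2 ^ d))))) :
    derivedSeries G (d + 1) ≤ (⊤ : Subgroup G).lowerCentralSeries (2 ^ (d + 1)) := by
  have hpos : 1 ≤ 2 ^ d := Nat.one_le_two_pow
  rw [derivedSeries_succ]
  refine commutator_le_of_isCyclic_map hcyc ?_ ?_
  · refine (commutator_mono (derivedSeries_le_lowerCentralSeries_two_pow_sub_one d) le_rfl).trans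
      ((commutator_lowerCentralSeries_le _ _).trans (Subgroup.lowerCentralSeries_antitone _ ?_))
    rw [pow_succ]
    omega
  · refine (commutator_lowerCentralSeries_le _ _).trans (Subgroup.lowerCentralSeries_antitone _ ?_)
    rw [pow_succ]
    omega

end LowerCentralSeries

theorem derivedSeries_le_of_cyclic_image_general
    {G : Type*} [Group G]
    (d : ℕ)
    (hcyc : IsCyclic
      (Subgroup.map (QuotientGroup.mk' ((⊤ : Subgroup G).lowerCentralSeries (2 ^ d)))
        (derivedSeries G d))) :
    ∀ e, 1 ≤ e →
      derivedSeries G (d + e) ≤ (⊤ : Subgroup G).lowerCentralSeries (2 ^ (d + e) + 2 ^ (e - 1) - 1) := by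
  intro e he
  obtain ⟨e, rfl⟩ := Nat.exists_eq_add_of_le' he
  have h := derivedSeries_add_le_lowerCentralSeries
    (derivedSeries_succ_le_of_isCyclic_map d hcyc) e
  have hidx : 2 ^ e * (2 ^ (d + 1) + 1) = 2 ^ (d + (e + 1)) + 2 ^ e := by ring
  rwa [add_right_comm, hidx] at h

theorem derivedSeries_le_of_cyclic_image
    {p : ℕ} [Fact p.Prime] {G : Type*} [Group G] [Finite G]
    (hG : IsPGroup p G) (d : ℕ) (hd : 1 ≤ d)
    (hcyc : IsCyclic
      (Subgroup.map (QuotientGroup.mk' ((⊤ : Subgroup G).lowerCentralSeries (2 ^ d)))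
        (derivedSeries G d))) :
    ∀ e, 1 ≤ e →
      derivedSeries G (d + e) ≤ (⊤ : Subgroup G).lowerCentralSeries (2 ^ (d + e) + 2 ^ (e - 1) - 1) :=
  derivedSeries_le_of_cyclic_image_general d hcyc
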